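/- For every integer n ≥ 5, the number of permutations of [n] whose peak set is exactly {2, n−1} equals (n−1)(n−4)·2^{n−3}. -/
import Mathlib


/-- The value `a_i` (1-indexed) of the permutation word `a_1 … a_n` given by `π`. -/
def pval (n : ℕ) (π : Equiv.Perm (Fin n)) (i : ℕ) : ℕ :=
  if h : i - 1 < n then ((π ⟨i - 1, h⟩ : Fin n) : ℕ) + 1 else 0

/-- The peak set of a permutation of `[n]`: indices `i` with `2 ≤ i ≤ n-1` and
`a_{i-1} < a_i > a_{i+1}`. -/
def peakSet (n : ℕ) (π : Equiv.Perm (Fin n)) : Finset ℕ :=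
  (Finset.range n).filter fun i =>
    2 ≤ i ∧ i + 1 ≤ n ∧ pval n π (i - 1) < pval n π i ∧ pval n π (i + 1) < pval n π i

/-- `P(S;n)`: permutations of `[n]` with peak set exactly `S`. -/
def peakPerms (S : Finset ℕ) (n : ℕ) : Finset (Equiv.Perm (Fin n)) :=
  Finset.univ.filter fun π => peakSet n π = S

section Ins

variable {m : ℕ}

/-- Insert the new maximum value `m` at position `k` (0-indexed). -/
def insFun (σ : Equiv.Perm (Fin m)) (k : Fin (m+1)) (p : Fin (m+1)) : Fin (m+1) :=
  if h : p.val < k.val then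
    ⟨(σ ⟨p.val, by omega⟩).val, by have := (σ ⟨p.val, by omega⟩).isLt; omega⟩
  else if h2 : p.val = k.val then ⟨m, by omega⟩
  else
    ⟨(σ ⟨p.val - 1, by have := p.isLt; omega⟩).val,
      by have := (σ ⟨p.val - 1, by have := p.isLt; omega⟩).isLt; omega⟩

lemma insFun_injective (σ : Equiv.Perm (Fin m)) (k : Fin (m+1)) :
    Function.Injective (insFun σ k) := by
  intro p q h
  have h' := congrArg Fin.val h
  have hk := k.isLt
  have hp := p.isLt
  have hq := q.isLt
  unfold insFun at h'
  apply Fin.ext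
  split_ifs at h' with h1 h2 h3 h4 h5 h6 h7 h8 h9 <;>
    simp only [Fin.val_mk] at h' <;>
    first
    | omega
    | (first
        | (exfalso; have := (σ ⟨p.val, by omega⟩).isLt; omega)
        | (exfalso; have := (σ ⟨q.val, by omega⟩).isLt; omega)
        | (exfalso; have := (σ ⟨p.val - 1, by omega⟩).isLt; omega)
        | (exfalso; have := (σ ⟨q.val - 1, by omega⟩).isLt; omega))
    | (have h'' := σ.injective (Fin.ext h');
       have := congrArg Fin.val h''; simp only [Fin.val_mk] at this; omega)

noncomputable def insMax (σ : Equiv.Perm (Fin m)) (k : Fin (m+1)) :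
    Equiv.Perm (Fin (m+1)) :=
  Equiv.ofBijective _ (Finite.injective_iff_bijective.1 (insFun_injective σ k))

lemma insMax_apply (σ : Equiv.Perm (Fin m)) (k : Fin (m+1)) (p : Fin (m+1)) :
    insMax σ k p = insFun σ k p := rfl

lemma pval_le (n : ℕ) (π : Equiv.Perm (Fin n)) (i : ℕ) : pval n π i ≤ n := by
  unfold pval; split
  · exact (π _).isLt
  · omega

lemma pval_ins_lt (σ : Equiv.Perm (Fin m)) (k : Fin (m+1)) (j : ℕ) (h1 : 1 ≤ j)
    (h2 : j ≤ k.val) : pval (m+1) (insMax σ k) j = pval m σ j := by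
  have hk := k.isLt
  unfold pval
  rw [dif_pos (by omega : j - 1 < m + 1), dif_pos (by omega : j - 1 < m)]
  rw [insMax_apply]
  unfold insFun
  rw [dif_pos (show (⟨j - 1, by omega⟩ : Fin (m+1)).val < k.val by
    simp only [Fin.val_mk]; omega)]

lemma pval_ins_self (σ : Equiv.Perm (Fin m)) (k : Fin (m+1)) :
    pval (m+1) (insMax σ k) (k.val + 1) = m + 1 := by
  have hk := k.isLt
  unfold pval
  rw [dif_pos (by omega : k.val + 1 - 1 < m + 1)]
  rw [insMax_apply]
  unfold insFun
  rw [dif_neg (show ¬ (⟨k.val + 1 - 1, by omega⟩ : Fin (m+1)).val < k.val by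
        simp only [Fin.val_mk]; omega),
      dif_pos (show (⟨k.val + 1 - 1, by omega⟩ : Fin (m+1)).val = k.val by
        simp only [Fin.val_mk]; omega)]

lemma pval_ins_gt (σ : Equiv.Perm (Fin m)) (k : Fin (m+1)) (j : ℕ) (h1 : k.val + 2 ≤ j)
    (h2 : j ≤ m + 1) : pval (m+1) (insMax σ k) j = pval m σ (j - 1) := by
  unfold pval
  rw [dif_pos (by omega : j - 1 < m + 1), dif_pos (by omega : j - 1 - 1 < m)]
  rw [insMax_apply]
  unfold insFun
  rw [dif_neg (show ¬ (⟨j - 1, by omega⟩ : Fin (m+1)).val < k.val by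
        simp only [Fin.val_mk]; omega),
      dif_neg (show ¬ (⟨j - 1, by omega⟩ : Fin (m+1)).val = k.val by
        simp only [Fin.val_mk]; omega)]

lemma mem_peakSet_iff {n : ℕ} (π : Equiv.Perm (Fin n)) (i : ℕ) :
    i ∈ peakSet n π ↔ i < n ∧ 2 ≤ i ∧ pval n π (i - 1) < pval n π i ∧
      pval n π (i + 1) < pval n π i := by
  unfold peakSet
  simp only [Finset.mem_filter, Finset.mem_range]
  constructor
  · rintro ⟨h1, h2, h3, h4, h5⟩; exact ⟨h1, h2, h4, h5⟩
  · rintro ⟨h1, h2, h3, h4⟩; exact ⟨h1, h2, by omega, h3, h4⟩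

lemma peakSet_bounds {n : ℕ} {π : Equiv.Perm (Fin n)} {i : ℕ} (h : i ∈ peakSet n π) :
    2 ≤ i ∧ i ≤ n - 1 := by
  rw [mem_peakSet_iff] at h; omega

/-- The pval of σ is at most m, and positive in range. -/
lemma pval_pos {n : ℕ} (π : Equiv.Perm (Fin n)) (i : ℕ) (h : i - 1 < n) :
    1 ≤ pval n π i := by
  unfold pval; rw [dif_pos h]; omega

/-- Master lemma: peaks of the permutation obtained by inserting the max at position k. -/
lemma mem_peakSet_insMax (σ : Equiv.Perm (Fin m)) (k : Fin (m+1)) (i : ℕ) :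
    i ∈ peakSet (m+1) (insMax σ k) ↔
      (i + 1 ≤ k.val ∧ i ∈ peakSet m σ) ∨ (i = k.val + 1 ∧ 2 ≤ i ∧ i ≤ m) ∨
      (k.val + 3 ≤ i ∧ i - 1 ∈ peakSet m σ) := by
  have hk := k.isLt
  rw [mem_peakSet_iff]
  by_cases hi2 : 2 ≤ i
  swap
  · simp only [mem_peakSet_iff]; omega
  by_cases hin : i < m + 1
  swap
  · -- i too large: both sides false
    constructor
    · omega
    · rintro (⟨h1, h2⟩ | ⟨h1, h2⟩ | ⟨h1, h2⟩)
      · omega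
      · omega
      · rw [mem_peakSet_iff] at h2; omega
  -- main case split on position of i relative to k
  rcases Nat.lt_or_ge i k.val with hlt | hge
  · -- i + 1 ≤ k : peaks agree with σ
    rw [pval_ins_lt σ k (i-1) (by omega) (by omega),
        pval_ins_lt σ k i (by omega) (by omega),
        pval_ins_lt σ k (i+1) (by omega) (by omega)]
    rw [show ((i + 1 ≤ k.val ∧ i ∈ peakSet m σ) ∨ (i = k.val + 1 ∧ 2 ≤ i ∧ i ≤ m) ∨
      (k.val + 3 ≤ i ∧ i - 1 ∈ peakSet m σ)) ↔ (i ∈ peakSet m σ) from by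
        constructor
        · rintro (⟨_, h⟩ | ⟨h1, _⟩ | ⟨h1, _⟩) <;> first | exact h | omega
        · intro h; exact Or.inl ⟨by omega, h⟩]
    rw [mem_peakSet_iff]
    constructor
    · rintro ⟨_, _, h3, h4⟩; exact ⟨by omega, hi2, h3, h4⟩
    · rintro ⟨_, _, h3, h4⟩; exact ⟨hin, hi2, h3, h4⟩
  rcases Nat.eq_or_lt_of_le hge with heq | hgt
  · -- i = k : pval (i+1) = m+1 is too big
    have e1 : pval (m+1) (insMax σ k) (i+1) = m + 1 := by
      rw [← heq] at *; exact pval_ins_self σ k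
    have e2 : pval (m+1) (insMax σ k) i ≤ m + 1 := pval_le _ _ _
    have e3 : pval (m+1) (insMax σ k) i ≠ m + 1 := by
      -- value at position i is σ's value, < m+1... i = k, pval at i uses index i-1 < k
      rw [pval_ins_lt σ k i (by omega) (by omega)]
      have := pval_le m σ i; omega
    constructor
    · omega
    · rintro (⟨h1, h2⟩ | ⟨h1, h2⟩ | ⟨h1, h2⟩) <;> omega
  rcases Nat.eq_or_lt_of_le hgt with heq1 | hgt1
  · -- i = k + 1 : always a peak (given 2 ≤ i ≤ m)
    have e1 : pval (m+1) (insMax σ k) i = m + 1 := by rw [← heq1]; exact pval_ins_self σ k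
    have e2 : pval (m+1) (insMax σ k) (i-1) < m + 1 := by
      rcases Nat.eq_zero_or_pos k.val with hk0 | hk0
      · omega
      · rw [show i - 1 = k.val by omega, pval_ins_lt σ k k.val (by omega) (by omega)]
        have := pval_le m σ k.val; omega
    have e3 : pval (m+1) (insMax σ k) (i+1) < m + 1 := by
      by_cases him : i ≤ m
      · rw [pval_ins_gt σ k (i+1) (by omega) (by omega)]
        have := pval_le m σ (i+1-1); omega
      · omega
    constructor
    · intro; right; left; exact ⟨by omega, hi2, by omega⟩
    · rintro h; refine ⟨hin, hi2, by omega, by omega⟩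
  rcases Nat.eq_or_lt_of_le hgt1 with heq2 | hgt2
  · -- i = k + 2 : pval (i-1) = m+1, never a peak
    have e1 : pval (m+1) (insMax σ k) (i-1) = m + 1 := by
      rw [show i - 1 = k.val + 1 by omega]; exact pval_ins_self σ k
    have e2 : pval (m+1) (insMax σ k) i ≤ m + 1 := pval_le _ _ _
    have e3 : pval (m+1) (insMax σ k) i ≠ m + 1 := by
      rw [pval_ins_gt σ k i (by omega) (by omega)]
      have := pval_le m σ (i-1); omega
    constructor
    · omega
    · rintro (⟨h1, h2⟩ | ⟨h1, h2⟩ | ⟨h1, h2⟩) <;> omega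
  · -- i ≥ k + 3 : peaks shift by one
    rw [pval_ins_gt σ k (i-1) (by omega) (by omega),
        pval_ins_gt σ k i (by omega) (by omega),
        pval_ins_gt σ k (i+1) (by omega) (by omega)]
    rw [show i - 1 - 1 = (i-1) - 1 from rfl, show i + 1 - 1 = (i-1) + 1 by omega]
    rw [show ((i + 1 ≤ k.val ∧ i ∈ peakSet m σ) ∨ (i = k.val + 1 ∧ 2 ≤ i ∧ i ≤ m) ∨
      (k.val + 3 ≤ i ∧ i - 1 ∈ peakSet m σ)) ↔ (i - 1 ∈ peakSet m σ) from by
        constructor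
        · rintro (⟨h1, _⟩ | ⟨h1, _⟩ | ⟨_, h⟩) <;> first | exact h | omega
        · intro h; exact Or.inr (Or.inr ⟨by omega, h⟩)]
    rw [mem_peakSet_iff]
    constructor
    · rintro ⟨_, _, h3, h4⟩; exact ⟨by omega, by omega, h3, h4⟩
    · rintro ⟨_, _, h3, h4⟩; exact ⟨by omega, by omega, h3, h4⟩
end Ins


section Ins2

variable {m : ℕ}

/-- Helper: the word with position `k` deleted, assuming `π k` is the max. -/
def remFun (π : Equiv.Perm (Fin (m+1))) (q : Fin m) : Fin (m+1) :=
  if h : q.val < (π.symm ⟨m, by omega⟩).val then π ⟨q.val, by omega⟩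
  else π ⟨q.val + 1, by have := q.isLt; omega⟩

lemma remFun_ne_max (π : Equiv.Perm (Fin (m+1))) (q : Fin m) :
    (remFun π q).val < m := by
  have hq := q.isLt
  set k := π.symm ⟨m, by omega⟩ with hk
  have hπk : π k = ⟨m, by omega⟩ := π.apply_symm_apply _
  unfold remFun
  split_ifs with h
  · have harg : (⟨q.val, by omega⟩ : Fin (m+1)) ≠ k := by
      intro hc; have := congrArg Fin.val hc; simp only [Fin.val_mk] at this; omega
    have : π ⟨q.val, by omega⟩ ≠ ⟨m, by omega⟩ := by
      intro hc; exact harg (π.injective (by rw [hπk]; exact hc))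
    have h1 := (π ⟨q.val, by omega⟩).isLt
    have h2 : (π ⟨q.val, by omega⟩).val ≠ m := fun hc => this (Fin.ext hc)
    omega
  · have harg : (⟨q.val + 1, by omega⟩ : Fin (m+1)) ≠ k := by
      intro hc; have := congrArg Fin.val hc; simp only [Fin.val_mk] at this; omega
    have : π ⟨q.val + 1, by omega⟩ ≠ ⟨m, by omega⟩ := by
      intro hc; exact harg (π.injective (by rw [hπk]; exact hc))
    have h1 := (π ⟨q.val + 1, by omega⟩).isLt
    have h2 : (π ⟨q.val + 1, by omega⟩).val ≠ m := fun hc => this (Fin.ext hc)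
    omega

def remFun' (π : Equiv.Perm (Fin (m+1))) (q : Fin m) : Fin m :=
  ⟨(remFun π q).val, remFun_ne_max π q⟩

lemma remFun'_injective (π : Equiv.Perm (Fin (m+1))) : Function.Injective (remFun' π) := by
  intro a b hab
  have ha := a.isLt; have hb := b.isLt
  have h0 := congrArg Fin.val hab
  have h'' : remFun π a = remFun π b := Fin.ext h0
  unfold remFun at h''
  apply Fin.ext
  split_ifs at h'' with h1 h2 h2 <;>
  · have := congrArg Fin.val (π.injective h'')
    simp only [Fin.val_mk] at this
    omega

noncomputable def remPerm (π : Equiv.Perm (Fin (m+1))) : Equiv.Perm (Fin m) :=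
  Equiv.ofBijective _ (Finite.injective_iff_bijective.1 (remFun'_injective π))

lemma remPerm_apply (π : Equiv.Perm (Fin (m+1))) (q : Fin m) :
    remPerm π q = remFun' π q := rfl

lemma insMax_surj (π : Equiv.Perm (Fin (m+1))) : ∃ σ k, insMax σ k = π := by
  refine ⟨remPerm π, π.symm ⟨m, by omega⟩, ?_⟩
  set k := π.symm ⟨m, by omega⟩ with hk
  have hπk : π k = ⟨m, by omega⟩ := π.apply_symm_apply _
  apply Equiv.ext
  intro p
  have hp := p.isLt
  have hkl := k.isLt
  rw [insMax_apply]
  unfold insFun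
  split_ifs with h1 h2
  · apply Fin.ext
    simp only [Fin.val_mk]
    rw [remPerm_apply]
    unfold remFun' remFun
    simp only [Fin.val_mk]
    rw [dif_pos (show ((⟨p.val, by omega⟩ : Fin m)).val < k.val by
      simp only [Fin.val_mk]; omega)]
    all_goals exact congrArg Fin.val (congrArg π (Fin.ext rfl))
  · rw [show p = k from Fin.ext h2, hπk]
  · apply Fin.ext
    simp only [Fin.val_mk]
    rw [remPerm_apply]
    unfold remFun' remFun
    simp only [Fin.val_mk]
    rw [dif_neg (show ¬ ((⟨p.val - 1, by omega⟩ : Fin m)).val < k.val by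
      simp only [Fin.val_mk]; omega)]
    all_goals exact congrArg Fin.val (congrArg π (Fin.ext (by simp only [Fin.val_mk]; omega)))

lemma insMax_pair_inj : Function.Injective
    (fun p : Equiv.Perm (Fin m) × Fin (m+1) => insMax p.1 p.2) := by
  rintro ⟨σ, k⟩ ⟨σ', k'⟩ h
  simp only at h
  have hkk : k = k' := by
    by_contra hne
    have h1 : insMax σ k k = ⟨m, by omega⟩ := by
      rw [insMax_apply]; unfold insFun
      rw [dif_neg (by omega), dif_pos rfl]
    have h2 : insMax σ' k' k = ⟨m, by omega⟩ := by rw [← h]; exact h1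
    have h3 := congrArg Fin.val h2
    rw [insMax_apply] at h3
    unfold insFun at h3
    have hki := k.isLt
    split_ifs at h3 with ha hb
    · simp only [Fin.val_mk] at h3
      have := (σ' ⟨k.val, by omega⟩).isLt; omega
    · exact hne (Fin.ext hb)
    · simp only [Fin.val_mk] at h3
      have := (σ' ⟨k.val - 1, by omega⟩).isLt; omega
  subst hkk
  have hσ : σ = σ' := by
    apply Equiv.ext
    intro q
    have hqi := q.isLt
    by_cases hq : q.val < k.val
    · have h2 : insMax σ k ⟨q.val, by omega⟩ = insMax σ' k ⟨q.val, by omega⟩ := by rw [h]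
      rw [insMax_apply, insMax_apply] at h2
      unfold insFun at h2
      simp only [dif_pos (show ((⟨q.val, by omega⟩ : Fin (m+1))).val < k.val by
        simp only [Fin.val_mk]; omega)] at h2
      have h3 := congrArg Fin.val h2
      simp only [Fin.val_mk] at h3
      have hq1 : (⟨(⟨q.val, by omega⟩ : Fin (m+1)).val, by simp only [Fin.val_mk]; omega⟩ : Fin m) = q := by
        apply Fin.ext; simp only [Fin.val_mk]
      rw [hq1] at h3
      exact Fin.ext h3
    · have h2 : insMax σ k ⟨q.val + 1, by omega⟩ = insMax σ' k ⟨q.val + 1, by omega⟩ := by rw [h]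
      rw [insMax_apply, insMax_apply] at h2
      unfold insFun at h2
      simp only [dif_neg (show ¬ ((⟨q.val + 1, by omega⟩ : Fin (m+1))).val < k.val by
            simp only [Fin.val_mk]; omega),
          dif_neg (show ¬ ((⟨q.val + 1, by omega⟩ : Fin (m+1))).val = k.val by
            simp only [Fin.val_mk]; omega)] at h2
      have h3 := congrArg Fin.val h2
      simp only [Fin.val_mk] at h3
      have hq1 : (⟨(⟨q.val + 1, by omega⟩ : Fin (m+1)).val - 1, by simp only [Fin.val_mk]; omega⟩ : Fin m) = q := by
        apply Fin.ext; simp only [Fin.val_mk]; omega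
      rw [hq1] at h3
      exact Fin.ext h3
  rw [hσ]

end Ins2


section Ins3

variable {m : ℕ}

lemma card_peakPerms_succ (S : Finset ℕ) :
    (peakPerms S (m+1)).card = ∑ k : Fin (m+1),
      (Finset.univ.filter fun σ : Equiv.Perm (Fin m) =>
        peakSet (m+1) (insMax σ k) = S).card := by
  classical
  set T : Finset (Equiv.Perm (Fin m) × Fin (m+1)) :=
    Finset.univ.filter (fun p => peakSet (m+1) (insMax p.1 p.2) = S) with hT
  have h1 : peakPerms S (m+1) = T.image (fun p => insMax p.1 p.2) := by
    ext π
    simp only [peakPerms, Finset.mem_filter, Finset.mem_univ, true_and, Finset.mem_image, hT]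
    constructor
    · intro hπ
      obtain ⟨σ, k, hσk⟩ := insMax_surj π
      exact ⟨(σ, k), by rw [hσk]; exact hπ, hσk⟩
    · rintro ⟨p, hp, hins⟩
      rw [← hins]; exact hp
  rw [h1, Finset.card_image_of_injective _ insMax_pair_inj]
  rw [Finset.card_eq_sum_card_fiberwise
    (f := fun p : Equiv.Perm (Fin m) × Fin (m+1) => p.2) (t := Finset.univ)
    (fun _ _ => Finset.mem_univ _)]
  apply Finset.sum_congr rfl
  intro k _
  rw [show T.filter (fun p => p.2 = k) =
      (Finset.univ.filter fun σ : Equiv.Perm (Fin m) =>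
        peakSet (m+1) (insMax σ k) = S).image (fun σ => (σ, k)) from ?_]
  · rw [Finset.card_image_of_injective]
    intro a b hab
    exact (Prod.mk.injEq _ _ _ _ ▸ congrArg id hab).1.symm ▸ (congrArg Prod.fst hab)
  · ext p
    simp only [Finset.mem_filter, Finset.mem_image, Finset.mem_univ, true_and, hT]
    constructor
    · rintro ⟨hc, hk⟩
      exact ⟨p.1, by rw [← hk]; exact hc, by rw [← hk]⟩
    · rintro ⟨σ, hσ, hp⟩
      rw [← hp]
      exact ⟨hσ, rfl⟩

lemma peakSet_insMax_zero (σ : Equiv.Perm (Fin m)) :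
    peakSet (m+1) (insMax σ ⟨0, by omega⟩) = (peakSet m σ).image (· + 1) := by
  ext i
  rw [mem_peakSet_insMax]
  simp only [Finset.mem_image, Fin.val_mk]
  constructor
  · rintro (⟨h1, _⟩ | ⟨_, h2, _⟩ | ⟨h1, h2⟩)
    · omega
    · omega
    · exact ⟨i - 1, h2, by omega⟩
  · rintro ⟨j, hj, hji⟩
    have hb := peakSet_bounds hj
    right; right
    exact ⟨by omega, by rw [show i - 1 = j by omega]; exact hj⟩

lemma peakSet_insMax_last (σ : Equiv.Perm (Fin m)) :
    peakSet (m+1) (insMax σ ⟨m, by omega⟩) = peakSet m σ := by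
  ext i
  rw [mem_peakSet_insMax]
  simp only [Fin.val_mk]
  constructor
  · rintro (⟨_, h⟩ | ⟨_, _, h⟩ | ⟨h1, h2⟩)
    · exact h
    · omega
    · have hb := peakSet_bounds h2; omega
  · intro h
    have hb := peakSet_bounds h
    have hm : 1 ≤ m := by omega
    exact Or.inl ⟨by omega, h⟩

lemma peakSet_insMax_one (σ : Equiv.Perm (Fin m)) (hm : 2 ≤ m) :
    peakSet (m+1) (insMax σ ⟨1, by omega⟩) =
      insert 2 (((peakSet m σ).filter (fun j => 3 ≤ j)).image (· + 1)) := by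
  ext i
  rw [mem_peakSet_insMax]
  simp only [Finset.mem_insert, Finset.mem_image, Finset.mem_filter, Fin.val_mk]
  constructor
  · rintro (⟨h1, hP⟩ | ⟨h1, _, _⟩ | ⟨h1, h2⟩)
    · exfalso; have hb := peakSet_bounds hP; omega
    · left; omega
    · right; exact ⟨i - 1, ⟨h2, by omega⟩, by omega⟩
  · rintro (h | ⟨j, ⟨hj, hj3⟩, hji⟩)
    · right; left; exact ⟨by omega, by omega, by omega⟩
    · right; right; exact ⟨by omega, by rw [show i - 1 = j by omega]; exact hj⟩

lemma peakSet_insMax_pen (σ : Equiv.Perm (Fin m)) (hm : 2 ≤ m) :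
    peakSet (m+1) (insMax σ ⟨m - 1, by omega⟩) =
      insert m ((peakSet m σ).filter (fun j => j + 1 ≤ m - 1)) := by
  ext i
  rw [mem_peakSet_insMax]
  simp only [Finset.mem_insert, Finset.mem_filter, Fin.val_mk]
  constructor
  · rintro (⟨h1, h⟩ | ⟨h1, _, _⟩ | ⟨h1, h2⟩)
    · right; exact ⟨h, h1⟩
    · left; omega
    · have hb := peakSet_bounds h2; omega
  · rintro (h | ⟨hj, hj1⟩)
    · right; left; exact ⟨by omega, by omega, by omega⟩
    · exact Or.inl ⟨hj1, hj⟩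

lemma mid_mem (σ : Equiv.Perm (Fin m)) (k : Fin (m+1)) (h1 : 1 ≤ k.val) (h2 : k.val ≤ m - 1) :
    k.val + 1 ∈ peakSet (m+1) (insMax σ k) := by
  rw [mem_peakSet_insMax]
  right; left
  exact ⟨rfl, by omega, by omega⟩

lemma card_filter_or {m : ℕ} (A B : Finset ℕ) (hAB : A ≠ B) :
    (Finset.univ.filter fun σ : Equiv.Perm (Fin m) =>
      peakSet m σ = A ∨ peakSet m σ = B).card
      = (peakPerms A m).card + (peakPerms B m).card := by
  classical
  rw [Finset.filter_or]
  rw [Finset.card_union_of_disjoint]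
  · rfl
  · rw [Finset.disjoint_filter]
    intro σ _ h1 h2
    exact hAB (h1 ▸ h2 ▸ rfl)

end Ins3


section Ins4

variable {m : ℕ}

lemma e_rec (hm : 1 ≤ m) :
    (peakPerms (∅ : Finset ℕ) (m+1)).card = 2 * (peakPerms ∅ m).card := by
  rw [card_peakPerms_succ]
  set k0 : Fin (m+1) := ⟨0, by omega⟩ with hk0
  set k1 : Fin (m+1) := ⟨m, by omega⟩ with hk1
  have hne : k0 ≠ k1 := by
    intro h; have := congrArg Fin.val h; simp only [hk0, hk1, Fin.val_mk] at this; omega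
  rw [← Finset.sum_subset (Finset.subset_univ ({k0, k1} : Finset (Fin (m+1))))]
  · rw [Finset.sum_pair hne]
    have h0 : (Finset.univ.filter fun σ : Equiv.Perm (Fin m) =>
        peakSet (m+1) (insMax σ k0) = ∅).card = (peakPerms ∅ m).card := by
      apply congrArg
      apply Finset.filter_congr
      intro σ _
      rw [hk0, peakSet_insMax_zero, Finset.image_eq_empty]
    have h1 : (Finset.univ.filter fun σ : Equiv.Perm (Fin m) =>
        peakSet (m+1) (insMax σ k1) = ∅).card = (peakPerms ∅ m).card := by
      apply congrArg
      apply Finset.filter_congr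
      intro σ _
      rw [hk1, peakSet_insMax_last]
    rw [h0, h1]; ring
  · intro k _ hk
    simp only [Finset.mem_insert, Finset.mem_singleton] at hk
    push_neg at hk
    obtain ⟨hka, hkb⟩ := hk
    have hv0 : k.val ≠ 0 := fun h => hka (Fin.ext (by rw [h, hk0]))
    have hvm : k.val ≠ m := fun h => hkb (Fin.ext (by rw [h, hk1]))
    have hki := k.isLt
    rw [Finset.card_eq_zero, Finset.filter_eq_empty_iff]
    intro σ _
    intro hc
    have := mid_mem σ k (by omega) (by omega)
    rw [hc] at this
    exact absurd this (Finset.notMem_empty _)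

lemma g_rec (hm : 2 ≤ m) :
    (peakPerms ({2} : Finset ℕ) (m+1)).card =
      (peakPerms ∅ m).card + 2 * (peakPerms {2} m).card := by
  classical
  rw [card_peakPerms_succ]
  set k0 : Fin (m+1) := ⟨1, by omega⟩ with hk0
  set k1 : Fin (m+1) := ⟨m, by omega⟩ with hk1
  have hne : k0 ≠ k1 := by
    intro h; have := congrArg Fin.val h; simp only [hk0, hk1, Fin.val_mk] at this; omega
  rw [← Finset.sum_subset (Finset.subset_univ ({k0, k1} : Finset (Fin (m+1))))]
  · rw [Finset.sum_pair hne]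
    have h0 : (Finset.univ.filter fun σ : Equiv.Perm (Fin m) =>
        peakSet (m+1) (insMax σ k0) = {2}).card =
        (peakPerms ∅ m).card + (peakPerms {2} m).card := by
      rw [← card_filter_or (m := m) ∅ {2} (by
        intro h; have : (2:ℕ) ∈ (∅ : Finset ℕ) := h ▸ Finset.mem_singleton_self 2
        exact absurd this (Finset.notMem_empty _))]
      apply congrArg
      apply Finset.filter_congr
      intro σ _
      rw [hk0, peakSet_insMax_one σ hm]
      constructor
      · intro h
        have hsub : peakSet m σ ⊆ {2} := by
          intro j hj
          have hb := peakSet_bounds hj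
          rw [Finset.mem_singleton]
          by_contra hj2
          have : j + 1 ∈ insert 2 (((peakSet m σ).filter (fun j => 3 ≤ j)).image (· + 1)) := by
            apply Finset.mem_insert_of_mem
            exact Finset.mem_image_of_mem _ (Finset.mem_filter.2 ⟨hj, by omega⟩)
          rw [h, Finset.mem_singleton] at this
          omega
        exact Finset.subset_singleton_iff.1 hsub
      · rintro (h | h) <;> rw [h]
        · simp
        · rw [show Finset.filter (fun j => 3 ≤ j) ({2} : Finset ℕ) = ∅ by
            rw [Finset.filter_singleton]; simp]
          simp
    have h1 : (Finset.univ.filter fun σ : Equiv.Perm (Fin m) =>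
        peakSet (m+1) (insMax σ k1) = {2}).card = (peakPerms {2} m).card := by
      apply congrArg
      apply Finset.filter_congr
      intro σ _
      rw [hk1, peakSet_insMax_last]
    rw [h0, h1]; ring
  · intro k _ hk
    simp only [Finset.mem_insert, Finset.mem_singleton] at hk
    push_neg at hk
    obtain ⟨hka, hkb⟩ := hk
    have hv0 : k.val ≠ 1 := fun h => hka (Fin.ext (by rw [h, hk0]))
    have hvm : k.val ≠ m := fun h => hkb (Fin.ext (by rw [h, hk1]))
    have hki := k.isLt
    rw [Finset.card_eq_zero, Finset.filter_eq_empty_iff]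
    intro σ _ hc
    by_cases hz : k.val = 0
    · have hzf : k = ⟨0, by omega⟩ := Fin.ext hz
      rw [hzf, peakSet_insMax_zero] at hc
      have : (2:ℕ) ∈ (peakSet m σ).image (· + 1) := by rw [hc]; simp
      simp only [Finset.mem_image] at this
      obtain ⟨j, hj, hj2⟩ := this
      have := peakSet_bounds hj
      omega
    · have := mid_mem σ k (by omega) (by omega)
      rw [hc, Finset.mem_singleton] at this
      omega

lemma h_rec (hm : 2 ≤ m) :
    (peakPerms ({m} : Finset ℕ) (m+1)).card =
      (peakPerms ∅ m).card + 2 * (peakPerms {m-1} m).card := by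
  classical
  rw [card_peakPerms_succ]
  set k0 : Fin (m+1) := ⟨0, by omega⟩ with hk0
  set k1 : Fin (m+1) := ⟨m - 1, by omega⟩ with hk1
  have hne : k0 ≠ k1 := by
    intro h; have := congrArg Fin.val h; simp only [hk0, hk1, Fin.val_mk] at this; omega
  rw [← Finset.sum_subset (Finset.subset_univ ({k0, k1} : Finset (Fin (m+1))))]
  · rw [Finset.sum_pair hne]
    have h0 : (Finset.univ.filter fun σ : Equiv.Perm (Fin m) =>
        peakSet (m+1) (insMax σ k0) = {m}).card = (peakPerms {m-1} m).card := by
      apply congrArg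
      apply Finset.filter_congr
      intro σ _
      rw [hk0, peakSet_insMax_zero]
      show _ ↔ peakSet m σ = {m - 1}
      constructor
      · intro h
        ext j
        rw [Finset.mem_singleton]
        constructor
        · intro hj
          have hb := peakSet_bounds hj
          have : j + 1 ∈ (peakSet m σ).image (· + 1) := Finset.mem_image_of_mem _ hj
          rw [h, Finset.mem_singleton] at this
          omega
        · intro hj
          have : (m:ℕ) ∈ (peakSet m σ).image (· + 1) := by rw [h]; simp
          simp only [Finset.mem_image] at this
          obtain ⟨j', hj', hj2⟩ := this
          have := peakSet_bounds hj'
          rw [hj, show m - 1 = j' by omega]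
          exact hj'
      · intro h
        rw [h]
        rw [Finset.image_singleton]
        rw [Finset.singleton_inj]
        omega
    have h1 : (Finset.univ.filter fun σ : Equiv.Perm (Fin m) =>
        peakSet (m+1) (insMax σ k1) = {m}).card =
        (peakPerms ∅ m).card + (peakPerms {m-1} m).card := by
      rw [← card_filter_or (m := m) ∅ {m-1} (by
        intro h; have : (m-1:ℕ) ∈ (∅ : Finset ℕ) := h ▸ Finset.mem_singleton_self _
        exact absurd this (Finset.notMem_empty _))]
      apply congrArg
      apply Finset.filter_congr
      intro σ _
      rw [hk1, peakSet_insMax_pen σ hm]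
      constructor
      · intro h
        have hsub : peakSet m σ ⊆ {m-1} := by
          intro j hj
          have hb := peakSet_bounds hj
          rw [Finset.mem_singleton]
          by_contra hj2
          have : j ∈ insert m ((peakSet m σ).filter (fun j => j + 1 ≤ m - 1)) := by
            apply Finset.mem_insert_of_mem
            exact Finset.mem_filter.2 ⟨hj, by omega⟩
          rw [h, Finset.mem_singleton] at this
          omega
        exact Finset.subset_singleton_iff.1 hsub
      · rintro (h | h) <;> rw [h]
        · simp
        · rw [show Finset.filter (fun j => j + 1 ≤ m - 1) ({m-1} : Finset ℕ) = ∅ by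
            rw [Finset.filter_singleton]; rw [if_neg (by omega)]]
          simp
    rw [h0, h1]; ring
  · intro k _ hk
    simp only [Finset.mem_insert, Finset.mem_singleton] at hk
    push_neg at hk
    obtain ⟨hka, hkb⟩ := hk
    have hv0 : k.val ≠ 0 := fun h => hka (Fin.ext (by rw [h, hk0]))
    have hvm : k.val ≠ m - 1 := fun h => hkb (Fin.ext (by rw [h, hk1]))
    have hki := k.isLt
    rw [Finset.card_eq_zero, Finset.filter_eq_empty_iff]
    intro σ _ hc
    by_cases hz : k.val = m
    · have hzf : k = ⟨m, by omega⟩ := Fin.ext hz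
      rw [hzf, peakSet_insMax_last] at hc
      have : (m:ℕ) ∈ peakSet m σ := by rw [hc]; simp
      have := peakSet_bounds this
      omega
    · have := mid_mem σ k (by omega) (by omega)
      rw [hc, Finset.mem_singleton] at this
      omega

end Ins4


section Ins5

variable {m : ℕ}

lemma f_rec (hm : 4 ≤ m) :
    (peakPerms ({2, m} : Finset ℕ) (m+1)).card =
      (peakPerms ({2} : Finset ℕ) m).card + (peakPerms ({m-1} : Finset ℕ) m).card +
      2 * (peakPerms ({2, m-1} : Finset ℕ) m).card := by
  classical
  rw [card_peakPerms_succ]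
  set k0 : Fin (m+1) := ⟨1, by omega⟩ with hk0
  set k1 : Fin (m+1) := ⟨m - 1, by omega⟩ with hk1
  have hne : k0 ≠ k1 := by
    intro h; have := congrArg Fin.val h; simp only [hk0, hk1, Fin.val_mk] at this; omega
  rw [← Finset.sum_subset (Finset.subset_univ ({k0, k1} : Finset (Fin (m+1))))]
  · rw [Finset.sum_pair hne]
    have h0 : (Finset.univ.filter fun σ : Equiv.Perm (Fin m) =>
        peakSet (m+1) (insMax σ k0) = {2, m}).card =
        (peakPerms ({m-1} : Finset ℕ) m).card + (peakPerms ({2, m-1} : Finset ℕ) m).card := by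
      rw [← card_filter_or (m := m) {m-1} {2, m-1} (by
        intro h
        have : (2:ℕ) ∈ ({m-1} : Finset ℕ) := by
          rw [h]; exact Finset.mem_insert_self 2 _
        rw [Finset.mem_singleton] at this; omega)]
      apply congrArg
      apply Finset.filter_congr
      intro σ _
      rw [hk0, peakSet_insMax_one σ (by omega)]
      constructor
      · intro h
        have hmem : ∀ j ∈ peakSet m σ, j = 2 ∨ j = m - 1 := by
          intro j hj
          have hb := peakSet_bounds hj
          by_cases hj2 : j = 2
          · left; exact hj2
          · right
            have : j + 1 ∈ insert 2 (((peakSet m σ).filter (fun j => 3 ≤ j)).image (· + 1)) :=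
              Finset.mem_insert_of_mem
                (Finset.mem_image_of_mem _ (Finset.mem_filter.2 ⟨hj, by omega⟩))
            rw [h] at this
            simp only [Finset.mem_insert, Finset.mem_singleton] at this
            omega
        have hm1 : m - 1 ∈ peakSet m σ := by
          have : (m:ℕ) ∈ insert 2 (((peakSet m σ).filter (fun j => 3 ≤ j)).image (· + 1)) := by
            rw [h]; simp
          simp only [Finset.mem_insert, Finset.mem_image, Finset.mem_filter] at this
          rcases this with h2 | ⟨j, ⟨hj, _⟩, hjm⟩
          · omega
          · rw [show m - 1 = j by omega]; exact hj
        by_cases h2 : 2 ∈ peakSet m σ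
        · right
          ext j
          simp only [Finset.mem_insert, Finset.mem_singleton]
          constructor
          · exact fun hj => hmem j hj
          · rintro (hj | hj) <;> rw [hj]
            · exact h2
            · exact hm1
        · left
          ext j
          rw [Finset.mem_singleton]
          constructor
          · intro hj
            rcases hmem j hj with hj2 | hj2
            · exact absurd (hj2 ▸ hj) h2
            · exact hj2
          · intro hj; rw [hj]; exact hm1
      · rintro (h | h) <;> rw [h]
        · rw [show Finset.filter (fun j => 3 ≤ j) ({m-1} : Finset ℕ) = {m-1} by
            rw [Finset.filter_singleton, if_pos (by omega)]]
          rw [Finset.image_singleton]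
          rw [show m - 1 + 1 = m by omega]
        · rw [show Finset.filter (fun j => 3 ≤ j) ({2, m-1} : Finset ℕ) = {m-1} by
            ext j
            simp only [Finset.mem_filter, Finset.mem_insert, Finset.mem_singleton]
            omega]
          rw [Finset.image_singleton]
          rw [show m - 1 + 1 = m by omega]
    have h1 : (Finset.univ.filter fun σ : Equiv.Perm (Fin m) =>
        peakSet (m+1) (insMax σ k1) = {2, m}).card =
        (peakPerms ({2} : Finset ℕ) m).card + (peakPerms ({2, m-1} : Finset ℕ) m).card := by
      rw [← card_filter_or (m := m) {2} {2, m-1} (by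
        intro h
        have : (m-1:ℕ) ∈ ({2} : Finset ℕ) := by
          rw [h]; exact Finset.mem_insert_of_mem (Finset.mem_singleton_self _)
        rw [Finset.mem_singleton] at this; omega)]
      apply congrArg
      apply Finset.filter_congr
      intro σ _
      rw [hk1, peakSet_insMax_pen σ (by omega)]
      constructor
      · intro h
        have hmem : ∀ j ∈ peakSet m σ, j = 2 ∨ j = m - 1 := by
          intro j hj
          have hb := peakSet_bounds hj
          by_cases hjm : j = m - 1
          · right; exact hjm
          · left
            have : j ∈ insert m ((peakSet m σ).filter (fun j => j + 1 ≤ m - 1)) :=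
              Finset.mem_insert_of_mem (Finset.mem_filter.2 ⟨hj, by omega⟩)
            rw [h] at this
            simp only [Finset.mem_insert, Finset.mem_singleton] at this
            omega
        have h2 : 2 ∈ peakSet m σ := by
          have : (2:ℕ) ∈ insert m ((peakSet m σ).filter (fun j => j + 1 ≤ m - 1)) := by
            rw [h]; exact Finset.mem_insert_self _ _
          simp only [Finset.mem_insert, Finset.mem_filter] at this
          rcases this with h2 | ⟨hj, _⟩
          · omega
          · exact hj
        by_cases hm1 : m - 1 ∈ peakSet m σ
        · right
          ext j
          simp only [Finset.mem_insert, Finset.mem_singleton]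
          constructor
          · exact fun hj => hmem j hj
          · rintro (hj | hj) <;> rw [hj]
            · exact h2
            · exact hm1
        · left
          ext j
          rw [Finset.mem_singleton]
          constructor
          · intro hj
            rcases hmem j hj with hj2 | hj2
            · exact hj2
            · exact absurd (hj2 ▸ hj) hm1
          · intro hj; rw [hj]; exact h2
      · rintro (h | h) <;> rw [h]
        · rw [show Finset.filter (fun j => j + 1 ≤ m - 1) ({2} : Finset ℕ) = {2} by
            rw [Finset.filter_singleton, if_pos (by omega)]]
          rw [show (insert m ({2} : Finset ℕ)) = {2, m} from Finset.pair_comm m 2]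
        · rw [show Finset.filter (fun j => j + 1 ≤ m - 1) ({2, m-1} : Finset ℕ) = {2} by
            ext j
            simp only [Finset.mem_filter, Finset.mem_insert, Finset.mem_singleton]
            omega]
          rw [show (insert m ({2} : Finset ℕ)) = {2, m} from Finset.pair_comm m 2]
    rw [h0, h1]; ring
  · intro k _ hk
    simp only [Finset.mem_insert, Finset.mem_singleton] at hk
    push_neg at hk
    obtain ⟨hka, hkb⟩ := hk
    have hv0 : k.val ≠ 1 := fun h => hka (Fin.ext (by rw [h, hk0]))
    have hvm : k.val ≠ m - 1 := fun h => hkb (Fin.ext (by rw [h, hk1]))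
    have hki := k.isLt
    rw [Finset.card_eq_zero, Finset.filter_eq_empty_iff]
    intro σ _ hc
    by_cases hz : k.val = 0
    · have hzf : k = ⟨0, by omega⟩ := Fin.ext hz
      rw [hzf, peakSet_insMax_zero] at hc
      have : (2:ℕ) ∈ (peakSet m σ).image (· + 1) := by
        rw [hc]; exact Finset.mem_insert_self _ _
      simp only [Finset.mem_image] at this
      obtain ⟨j, hj, hj2⟩ := this
      have := peakSet_bounds hj
      omega
    by_cases hz2 : k.val = m
    · have hzf : k = ⟨m, by omega⟩ := Fin.ext hz2
      rw [hzf, peakSet_insMax_last] at hc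
      have : (m:ℕ) ∈ peakSet m σ := by
        rw [hc]; exact Finset.mem_insert_of_mem (Finset.mem_singleton_self _)
      have := peakSet_bounds this
      omega
    · have := mid_mem σ k (by omega) (by omega)
      rw [hc] at this
      simp only [Finset.mem_insert, Finset.mem_singleton] at this
      omega

end Ins5


lemma peakSet_small {n : ℕ} (hn : n ≤ 2) (π : Equiv.Perm (Fin n)) : peakSet n π = ∅ := by
  ext i
  rw [mem_peakSet_iff]
  simp only [Finset.notMem_empty, iff_false]
  omega

lemma e_base : (peakPerms (∅ : Finset ℕ) 1).card = 1 := by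
  have : peakPerms (∅ : Finset ℕ) 1 = Finset.univ := by
    ext π
    simp [peakPerms, peakSet_small (by omega) π]
  rw [this, Finset.card_univ, Fintype.card_perm]
  simp

lemma e_closed (m : ℕ) (hmm : 1 ≤ m) : (peakPerms (∅ : Finset ℕ) m).card = 2^(m-1) := by
  induction m, hmm using Nat.le_induction with
  | base => simpa using e_base
  | succ m hm ih =>
    rw [e_rec hm, ih]
    rw [show m + 1 - 1 = (m - 1) + 1 by omega, pow_succ]
    ring

lemma g_base : (peakPerms ({2} : Finset ℕ) 2).card = 0 := by
  rw [Finset.card_eq_zero]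
  ext π
  simp only [peakPerms, Finset.mem_filter, Finset.mem_univ, true_and,
    Finset.notMem_empty, iff_false]
  rw [peakSet_small (by omega) π]
  intro h
  have : (2:ℕ) ∈ (∅ : Finset ℕ) := h ▸ Finset.mem_singleton_self 2
  exact absurd this (Finset.notMem_empty _)

lemma h_base : (peakPerms ({1} : Finset ℕ) 2).card = 0 := by
  rw [Finset.card_eq_zero]
  ext π
  simp only [peakPerms, Finset.mem_filter, Finset.mem_univ, true_and,
    Finset.notMem_empty, iff_false]
  rw [peakSet_small (by omega) π]
  intro h
  have : (1:ℕ) ∈ (∅ : Finset ℕ) := h ▸ Finset.mem_singleton_self 1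
  exact absurd this (Finset.notMem_empty _)

lemma g_closed (m : ℕ) (hmm : 2 ≤ m) : (peakPerms ({2} : Finset ℕ) m).card = (m-2) * 2^(m-2) := by
  induction m, hmm using Nat.le_induction with
  | base => simpa using g_base
  | succ m hm ih =>
    rw [g_rec hm, ih, e_closed m (by omega)]
    obtain ⟨j, rfl⟩ : ∃ j, m = j + 2 := ⟨m - 2, by omega⟩
    rw [show j + 2 + 1 - 2 = j + 1 by omega, show j + 2 - 2 = j by omega,
        show j + 2 - 1 = j + 1 by omega, pow_succ]
    ring

lemma h_closed (m : ℕ) (hmm : 2 ≤ m) : (peakPerms ({m-1} : Finset ℕ) m).card = (m-2) * 2^(m-2) := by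
  induction m, hmm using Nat.le_induction with
  | base => simpa using h_base
  | succ m hm ih =>
    have hstep := h_rec hm
    rw [show m + 1 - 1 = m by omega]
    rw [hstep, ih, e_closed m (by omega)]
    obtain ⟨j, rfl⟩ : ∃ j, m = j + 2 := ⟨m - 2, by omega⟩
    rw [show j + 2 + 1 - 2 = j + 1 by omega, show j + 2 - 2 = j by omega,
        show j + 2 - 1 = j + 1 by omega, pow_succ]
    ring

lemma f_base : (peakPerms ({2, 3} : Finset ℕ) 4).card = 0 := by
  rw [Finset.card_eq_zero]
  ext π
  simp only [peakPerms, Finset.mem_filter, Finset.mem_univ, true_and,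
    Finset.notMem_empty, iff_false]
  intro h
  have h2 : (2:ℕ) ∈ peakSet 4 π := by rw [h]; exact Finset.mem_insert_self _ _
  have h3 : (3:ℕ) ∈ peakSet 4 π := by
    rw [h]; exact Finset.mem_insert_of_mem (Finset.mem_singleton_self _)
  rw [mem_peakSet_iff] at h2 h3
  obtain ⟨_, _, _, h2b⟩ := h2
  obtain ⟨_, _, h3a, _⟩ := h3
  norm_num at h2b h3a
  omega



lemma f_closed (n : ℕ) (hnn : 4 ≤ n) :
    (peakPerms ({2, n-1} : Finset ℕ) n).card = (n-1) * (n-4) * 2^(n-3) := by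
  induction n, hnn using Nat.le_induction with
  | base => simpa using f_base
  | succ m hm ih =>
    obtain ⟨j, rfl⟩ : ∃ j, m = j + 4 := ⟨m - 4, by omega⟩
    have hstep := f_rec (m := j + 4) (by omega)
    rw [show j + 4 + 1 - 1 = j + 4 by omega]
    rw [hstep, ih, g_closed (j+4) (by omega), h_closed (j+4) (by omega)]
    rw [show j + 4 - 1 = j + 3 by omega, show j + 4 - 2 = j + 2 by omega,
        show j + 4 - 4 = j by omega, show j + 4 - 3 = j + 1 by omega,
        show j + 4 + 1 - 4 = j + 1 by omega, show j + 4 + 1 - 3 = j + 2 by omega]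
    ring

/-- For `n ≥ 5`, `#P({2,n-1};n) = (n-1)(n-4) * 2^(n-3)`. -/
theorem stmt_7 (n : ℕ) (hn : 5 ≤ n) :
    ((peakPerms ({2, n - 1} : Finset ℕ) n).card : ℤ) =
      ((n : ℤ) - 1) * ((n : ℤ) - 4) * 2 ^ (n - 3) := by
  rw [f_closed n (by omega)]
  push_cast [Nat.cast_sub (by omega : 1 ≤ n), Nat.cast_sub (by omega : 4 ≤ n)]
  ring
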